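/- arXiv:2405.05895 — 2 statements merged into one kernel-verified Lean document; each statement's English description precedes it below -/
import Mathlib

section
/- Let V = ℂ³ with basis e₁,e₂,e₃ and dual basis α₁,α₂,α₃, and let T₃ = Σ_{1≤i<j≤3} (α_i⊗α_j − α_j⊗α_i)⊗(e_i∧e_j) ∈ V*⊗V*⊗Λ²V. Then T₃ = lim_{t→0} (1/t)[ tα₁⊗α₂⊗(e₁∧e₂) − tα₂⊗α₁⊗(e₁∧e₂) + (α₃+tα₁)⊗(α₃−tα₁)⊗(e₁∧e₃) + (α₃+tα₂)⊗(α₃−tα₂)⊗(e₂∧e₃) − α₃⊗α₃⊗(e₁∧e₃+e₂∧e₃) ]. In particular the border rank of T₃ is at most 5. -/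
open Filter Topology

/-- Standard basis vector `e_i` of `ℂ³` (identified with its dual basis vector `α_i`). -/
noncomputable def basisVec (i : Fin 3) : Fin 3 → ℂ := Pi.single i 1

/-- The wedge `e_p ∧ e_q`, realized as the antisymmetric matrix `E_{pq} - E_{qp}`. -/
noncomputable def wedge (p q : Fin 3) : Fin 3 → Fin 3 → ℂ :=
  fun c d => basisVec p c * basisVec q d - basisVec q c * basisVec p d

/-- The rank-one tensor `u ⊗ v ⊗ w` in `V* ⊗ V* ⊗ Λ²V`, in coordinates. -/
noncomputable def tri (u v : Fin 3 → ℂ) (w : Fin 3 → Fin 3 → ℂ) :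
    Fin 3 → Fin 3 → Fin 3 → Fin 3 → ℂ :=
  fun a b c d => u a * v b * w c d

/-- `T₃ = Σ_{1≤i<j≤3} (α_i ⊗ α_j - α_j ⊗ α_i) ⊗ (e_i ∧ e_j)`. -/
noncomputable def T3 : Fin 3 → Fin 3 → Fin 3 → Fin 3 → ℂ :=
  ∑ i : Fin 3, ∑ j : Fin 3,
    if i < j then
      tri (basisVec i) (basisVec j) (wedge i j) - tri (basisVec j) (basisVec i) (wedge i j)
    else 0

noncomputable def Ecorr : Fin 3 → Fin 3 → Fin 3 → Fin 3 → ℂ :=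
  tri (basisVec 0) (basisVec 0) (wedge 0 2) + tri (basisVec 1) (basisVec 1) (wedge 1 2)

lemma T3_eq : T3 =
    tri (basisVec 0) (basisVec 1) (wedge 0 1) - tri (basisVec 1) (basisVec 0) (wedge 0 1)
    + (tri (basisVec 0) (basisVec 2) (wedge 0 2) - tri (basisVec 2) (basisVec 0) (wedge 0 2))
    + (tri (basisVec 1) (basisVec 2) (wedge 1 2) - tri (basisVec 2) (basisVec 1) (wedge 1 2)) := by
  simp only [T3, Fin.sum_univ_succ, Fin.sum_univ_zero]
  norm_num [Fin.lt_def]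

lemma key (t : ℂ) :
    (t • tri (basisVec 0) (basisVec 1) (wedge 0 1)
      - t • tri (basisVec 1) (basisVec 0) (wedge 0 1)
      + tri (basisVec 2 + t • basisVec 0) (basisVec 2 - t • basisVec 0) (wedge 0 2)
      + tri (basisVec 2 + t • basisVec 1) (basisVec 2 - t • basisVec 1) (wedge 1 2)
      - tri (basisVec 2) (basisVec 2) (wedge 0 2 + wedge 1 2))
    = t • T3 - (t * t) • Ecorr := by
  rw [T3_eq]
  funext a b c d
  simp only [Ecorr, tri, Pi.add_apply, Pi.sub_apply, Pi.smul_apply, smul_eq_mul]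
  ring

theorem stmt12 :
    Tendsto
      (fun t : ℂ => t⁻¹ •
        (t • tri (basisVec 0) (basisVec 1) (wedge 0 1)
          - t • tri (basisVec 1) (basisVec 0) (wedge 0 1)
          + tri (basisVec 2 + t • basisVec 0) (basisVec 2 - t • basisVec 0) (wedge 0 2)
          + tri (basisVec 2 + t • basisVec 1) (basisVec 2 - t • basisVec 1) (wedge 1 2)
          - tri (basisVec 2) (basisVec 2) (wedge 0 2 + wedge 1 2)))
      (𝓝[≠] (0 : ℂ)) (𝓝 T3) ∧
    T3 ∈
      closure {x : Fin 3 → Fin 3 → Fin 3 → Fin 3 → ℂ |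
        ∃ (u v : Fin 5 → (Fin 3 → ℂ)) (w : Fin 5 → (Fin 3 → Fin 3 → ℂ)),
          (∀ i c d, w i c d = - w i d c) ∧ x = ∑ i : Fin 5, tri (u i) (v i) (w i)} := by
  have hev : ∀ᶠ t in 𝓝[≠] (0 : ℂ),
      (T3 - t • Ecorr) = t⁻¹ •
        (t • tri (basisVec 0) (basisVec 1) (wedge 0 1)
          - t • tri (basisVec 1) (basisVec 0) (wedge 0 1)
          + tri (basisVec 2 + t • basisVec 0) (basisVec 2 - t • basisVec 0) (wedge 0 2)
          + tri (basisVec 2 + t • basisVec 1) (basisVec 2 - t • basisVec 1) (wedge 1 2)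
          - tri (basisVec 2) (basisVec 2) (wedge 0 2 + wedge 1 2)) := by
    filter_upwards [self_mem_nhdsWithin] with t ht
    rw [key t, smul_sub, smul_smul, smul_smul, inv_mul_cancel₀ ht, one_smul,
      ← mul_assoc, inv_mul_cancel₀ ht, one_mul]
  have h1 : Tendsto
      (fun t : ℂ => t⁻¹ •
        (t • tri (basisVec 0) (basisVec 1) (wedge 0 1)
          - t • tri (basisVec 1) (basisVec 0) (wedge 0 1)
          + tri (basisVec 2 + t • basisVec 0) (basisVec 2 - t • basisVec 0) (wedge 0 2)
          + tri (basisVec 2 + t • basisVec 1) (basisVec 2 - t • basisVec 1) (wedge 1 2)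
          - tri (basisVec 2) (basisVec 2) (wedge 0 2 + wedge 1 2)))
      (𝓝[≠] (0 : ℂ)) (𝓝 T3) := by
    have h0 : Tendsto (fun t : ℂ => T3 - t • Ecorr) (𝓝 (0 : ℂ)) (𝓝 T3) := by
      have := (tendsto_const_nhds (x := T3) (f := 𝓝 (0:ℂ))).sub
        ((tendsto_id (x := 𝓝 (0:ℂ))).smul_const Ecorr)
      simpa using this
    exact (h0.mono_left nhdsWithin_le_nhds).congr' hev
  refine ⟨h1, mem_closure_of_tendsto h1 ?_⟩
  filter_upwards with t
  refine ⟨![(t⁻¹ * t) • basisVec 0, -((t⁻¹ * t) • basisVec 1),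
      t⁻¹ • (basisVec 2 + t • basisVec 0), t⁻¹ • (basisVec 2 + t • basisVec 1),
      -(t⁻¹ • basisVec 2)],
    ![basisVec 1, basisVec 0, basisVec 2 - t • basisVec 0,
      basisVec 2 - t • basisVec 1, basisVec 2],
    ![wedge 0 1, wedge 0 1, wedge 0 2, wedge 1 2, wedge 0 2 + wedge 1 2], ?_, ?_⟩
  · intro i c d
    fin_cases i <;> simp [wedge] <;> ring
  · funext a b c d
    simp only [tri, Fin.sum_univ_five, Matrix.cons_val_zero, Matrix.cons_val_one,
      Matrix.head_cons, Matrix.cons_val_two, Matrix.tail_cons, Matrix.cons_val_three,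
      Matrix.cons_val_four, Pi.add_apply, Pi.sub_apply, Pi.smul_apply, Pi.neg_apply,
      smul_eq_mul]
    ring
end

section
/- For dim V = 3 and the GL(V)-equivariant map φ: V → Hom(S_{(2,1)}V, S_{(2,2)}V), every nonzero v ∈ V gives a matrix φ_v of rank exactly 5; concretely, the 6×8 matrix M(x₁,x₂,x₃) with rows/columns as in the explicit presentation (whose entries are linear in x₁,x₂,x₃) has rank 5 for every (x₁,x₂,x₃) ≠ (0,0,0). -/
/-!
The vector `w = (x₃², -x₂x₃, x₂², x₁x₃, -x₁x₂, x₁²)` lies in the left kernel of `M x` and is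
nonzero as soon as `x ≠ 0`, so `rank (M x) ≤ 5`.
Conversely, three triangular `5 × 5` minors of `M x` have determinants `-x₁⁵`, `-x₂⁵` and `x₃⁵`,
so one of them is nonzero and `rank (M x) ≥ 5`.
-/

/-- The explicit `6 × 8` matrix presentation of `φ_v` for
`φ : V → Hom(S_{(2,1)}V, S_{(2,2)}V)`, `dim V = 3`. -/
noncomputable def M (x₁ x₂ x₃ : ℂ) : Matrix (Fin 6) (Fin 8) ℂ :=
  !![x₂, 0, -x₁, 0, 0, 0, 0, 0;
     x₃, x₂, 0, -x₁, -x₁, 0, 0, 0;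
     0, x₃, 0, 0, 0, -x₁, 0, 0;
     0, 0, x₃, 0, -x₂, 0, -x₁, 0;
     0, 0, 0, x₃, 0, -x₂, 0, -x₁;
     0, 0, 0, 0, 0, 0, x₃, -x₂]

namespace Matrix

variable {m n ι K : Type*} [Fintype n] [Field K]

theorem card_le_rank_of_det_submatrix_ne_zero [Fintype ι] [DecidableEq ι] (A : Matrix m n K)
    (r : ι → m) (c : ι → n) (hdet : (A.submatrix r c).det ≠ 0) : Fintype.card ι ≤ A.rank := by
  have hunit : IsUnit (A.submatrix r c) := (isUnit_iff_isUnit_det _).2 hdet.isUnit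
  simpa [rank_of_isUnit _ hunit] using rank_submatrix_le A r c

theorem rank_lt_card_height_of_vecMul_eq_zero [Fintype m] (A : Matrix m n K) {w : m → K}
    (hw : w ≠ 0) (hwA : w ᵥ* A = 0) : A.rank < Fintype.card m := by
  have hker : w ∈ LinearMap.ker Aᵀ.mulVecLin := by
    simpa [mulVec_transpose] using hwA
  have hnullity : 0 < Module.finrank K (LinearMap.ker Aᵀ.mulVecLin) :=
    Module.finrank_pos_iff_exists_ne_zero.2 ⟨⟨w, hker⟩, by simpa using hw⟩
  have hrank_nullity := LinearMap.finrank_range_add_finrank_ker Aᵀ.mulVecLin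
  rw [Module.finrank_fintype_fun_eq_card] at hrank_nullity
  rw [← rank_transpose, rank]
  omega

end Matrix

open Matrix

theorem vecMul_M_eq_zero (x₁ x₂ x₃ : ℂ) :
    ![x₃ ^ 2, -(x₂ * x₃), x₂ ^ 2, x₁ * x₃, -(x₁ * x₂), x₁ ^ 2] ᵥ* M x₁ x₂ x₃ = 0 := by
  ext j
  fin_cases j <;> simp [vecMul, dotProduct, Fin.sum_univ_succ, M] <;> ring

theorem det_M_submatrix_eq_neg_pow_x₁ (x₁ x₂ x₃ : ℂ) :
    ((M x₁ x₂ x₃).submatrix ![0, 1, 2, 3, 4] ![2, 3, 5, 6, 7]).det = -x₁ ^ 5 := by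
  rw [det_of_isLowerTriangular]
  · simp [Fin.prod_univ_succ, M]
    ring
  · intro i j hij
    fin_cases i <;> fin_cases j <;> simp_all [M] <;> contradiction

theorem det_M_submatrix_eq_neg_pow_x₂ (x₁ x₂ x₃ : ℂ) :
    ((M x₁ x₂ x₃).submatrix ![0, 3, 1, 5, 4] ![0, 4, 1, 7, 5]).det = -x₂ ^ 5 := by
  rw [det_of_isLowerTriangular]
  · simp [Fin.prod_univ_succ, M]
    ring
  · intro i j hij
    fin_cases i <;> fin_cases j <;> simp_all [M] <;> contradiction

theorem det_M_submatrix_eq_pow_x₃ (x₁ x₂ x₃ : ℂ) :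
    ((M x₁ x₂ x₃).submatrix ![1, 2, 3, 4, 5] ![0, 1, 2, 3, 6]).det = x₃ ^ 5 := by
  rw [det_of_isUpperTriangular]
  · simp [Fin.prod_univ_succ, M]
    ring
  · intro i j hij
    fin_cases i <;> fin_cases j <;> simp_all [M]

theorem rank_M_le (x₁ x₂ x₃ : ℂ) (h : ¬(x₁ = 0 ∧ x₂ = 0 ∧ x₃ = 0)) :
    (M x₁ x₂ x₃).rank ≤ 5 := by
  have hw : ![x₃ ^ 2, -(x₂ * x₃), x₂ ^ 2, x₁ * x₃, -(x₁ * x₂), x₁ ^ 2] ≠ 0 := by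
    intro hw
    exact h ⟨pow_eq_zero_iff two_ne_zero |>.1 (congrFun hw 5),
      pow_eq_zero_iff two_ne_zero |>.1 (congrFun hw 2),
      pow_eq_zero_iff two_ne_zero |>.1 (congrFun hw 0)⟩
  have := rank_lt_card_height_of_vecMul_eq_zero _ hw (vecMul_M_eq_zero x₁ x₂ x₃)
  simp only [Fintype.card_fin] at this
  omega

theorem le_rank_M (x₁ x₂ x₃ : ℂ) (h : ¬(x₁ = 0 ∧ x₂ = 0 ∧ x₃ = 0)) :
    5 ≤ (M x₁ x₂ x₃).rank := by
  have key := card_le_rank_of_det_submatrix_ne_zero (ι := Fin 5) (M x₁ x₂ x₃)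
  simp only [Fintype.card_fin] at key
  by_cases h₁ : x₁ = 0
  · by_cases h₂ : x₂ = 0
    · exact key _ _ <| by
        rw [det_M_submatrix_eq_pow_x₃]
        exact pow_ne_zero 5 fun h₃ => h ⟨h₁, h₂, h₃⟩
    · exact key _ _ <| by
        rw [det_M_submatrix_eq_neg_pow_x₂]
        exact neg_ne_zero.2 (pow_ne_zero 5 h₂)
  · exact key _ _ <| by
      rw [det_M_submatrix_eq_neg_pow_x₁]
      exact neg_ne_zero.2 (pow_ne_zero 5 h₁)

theorem stmt15 (x₁ x₂ x₃ : ℂ) (h : ¬(x₁ = 0 ∧ x₂ = 0 ∧ x₃ = 0)) :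
    (M x₁ x₂ x₃).rank = 5 :=
  (rank_M_le x₁ x₂ x₃ h).antisymm (le_rank_M x₁ x₂ x₃ h)
end
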